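/- arXiv:1908.09950 — 3 statements merged into one kernel-verified Lean document; each statement's English description precedes it below -/
import Mathlib

section
/- The Minkowski sum of two constrained zonotopes Z = {c_z + G_z ξ : ‖ξ‖∞ ≤ 1, A_z ξ = b_z} and W = {c_w + G_w η : ‖η‖∞ ≤ 1, A_w η = b_w} in ℝⁿ equals the constrained zonotope with center c_z + c_w, generator matrix [G_z G_w], constraint matrix blockdiag(A_z, A_w), and constraint vector (b_z; b_w). -/
/-!
Parametrise the sum by the concatenated vector `(ξ; η)`: the box constraint and the
block-diagonal equality constraint split into those of `Z` and `W`, and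
`[G_z G_w] (ξ; η) = G_z ξ + G_w η`.
-/

open Matrix Pointwise

theorem Matrix.fromBlocks_zero_zero_mulVec_sumElim {α l m n o : Type*} [Fintype l] [Fintype m]
    [NonUnitalNonAssocSemiring α] (A : Matrix n l α) (D : Matrix o m α) (x : l → α) (y : m → α) :
    fromBlocks A 0 0 D *ᵥ Sum.elim x y = Sum.elim (A *ᵥ x) (D *ᵥ y) := by
  simp [fromBlocks_mulVec]

section ConstrainedZonotope

variable {R ι κ κ' μ μ' : Type*} [Ring R] [Lattice R] [Fintype κ] [Fintype κ']

def constrainedZonotope (c : ι → R) (G : Matrix ι κ R) (A : Matrix μ κ R) (b : μ → R) :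
    Set (ι → R) :=
  {x | ∃ ξ : κ → R, (∀ i, |ξ i| ≤ 1) ∧ A *ᵥ ξ = b ∧ x = c + G *ᵥ ξ}

theorem constrainedZonotope_add (c : ι → R) (G : Matrix ι κ R) (A : Matrix μ κ R) (b : μ → R)
    (c' : ι → R) (G' : Matrix ι κ' R) (A' : Matrix μ' κ' R) (b' : μ' → R) :
    constrainedZonotope c G A b + constrainedZonotope c' G' A' b' =
      constrainedZonotope (c + c') (fromCols G G') (fromBlocks A 0 0 A') (Sum.elim b b') := by
  ext x
  constructor
  · rintro ⟨_, ⟨ξ, hξ, hAξ, rfl⟩, _, ⟨η, hη, hAη, rfl⟩, rfl⟩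
    refine ⟨Sum.elim ξ η, Sum.forall.2 ⟨hξ, hη⟩, ?_, ?_⟩
    · rw [fromBlocks_zero_zero_mulVec_sumElim, hAξ, hAη]
    · rw [fromCols_mulVec_sumElim, add_add_add_comm]
  · rintro ⟨ζ, hζ, hAζ, rfl⟩
    obtain ⟨ξ, η, rfl⟩ : ∃ ξ η, ζ = Sum.elim ξ η := ⟨_, _, (Sum.elim_comp_inl_inr ζ).symm⟩
    rw [fromBlocks_zero_zero_mulVec_sumElim, Sum.elim_eq_iff] at hAζ
    refine ⟨_, ⟨ξ, fun i ↦ hζ (.inl i), hAζ.1, rfl⟩, _, ⟨η, fun i ↦ hζ (.inr i), hAζ.2, rfl⟩, ?_⟩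
    rw [fromCols_mulVec_sumElim, add_add_add_comm]

end ConstrainedZonotope

/-- The Minkowski sum of two constrained zonotopes is the constrained zonotope
with center `c_z + c_w`, generators `[G_z  G_w]`, constraint matrix
`blkdiag(A_z, A_w)` and right-hand side `(b_z; b_w)`. -/
theorem constrained_zonotope_minkowski_sum
    (n gz gw cz' cw' : ℕ)
    (Gz : Matrix (Fin n) (Fin gz) ℝ) (cz : Fin n → ℝ)
    (Az : Matrix (Fin cz') (Fin gz) ℝ) (bz : Fin cz' → ℝ)
    (Gw : Matrix (Fin n) (Fin gw) ℝ) (cw : Fin n → ℝ)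
    (Aw : Matrix (Fin cw') (Fin gw) ℝ) (bw : Fin cw' → ℝ) :
    {x : Fin n → ℝ | ∃ z ∈ {x : Fin n → ℝ | ∃ ξ : Fin gz → ℝ,
          (∀ i, |ξ i| ≤ 1) ∧ Az.mulVec ξ = bz ∧ x = cz + Gz.mulVec ξ},
        ∃ w ∈ {x : Fin n → ℝ | ∃ η : Fin gw → ℝ,
          (∀ i, |η i| ≤ 1) ∧ Aw.mulVec η = bw ∧ x = cw + Gw.mulVec η},
        x = z + w}
    = {x : Fin n → ℝ | ∃ ξ : Fin gz ⊕ Fin gw → ℝ,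
        (∀ i, |ξ i| ≤ 1) ∧
        (Matrix.fromBlocks Az 0 0 Aw).mulVec ξ = Sum.elim bz bw ∧
        x = (cz + cw) + (Matrix.fromCols Gz Gw).mulVec ξ} := by
  refine Eq.trans ?_ (constrainedZonotope_add cz Gz Az bz cw Gw Aw bw)
  ext x
  rw [Set.mem_add]
  exact exists_congr fun z ↦ and_congr_right fun _ ↦
    exists_congr fun w ↦ and_congr_right fun _ ↦ eq_comm
end

section
/- (CZ-inclusion) Let X = p ⊕ M B∞(A,b) ⊂ ℝ^m be a constrained zonotope, J ∈ 𝕀ℝ^{n×m} an interval matrix, and S = {Ĵx : Ĵ ∈ J, x ∈ X}. Let X̄ = p̄ ⊕ M̄ B∞ be a zonotope with X ⊆ X̄, let m be an interval vector with midpoint 0 satisfying (J − mid(J)) p̄ ⊆ m, and let P be the diagonal matrix with P_ii = (1/2) diam(m_i) + (1/2) Σ_j Σ_k diam(J_ik) |M̄_kj|. Then S ⊆ mid(J) X ⊕ P B∞ⁿ. -/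
/-!
Write `x = p̄ + M̄γ` with `‖γ‖∞ ≤ 1`, which is possible since `X ⊆ X̄`. Then
`Ĵx − mid(J)x = (Ĵ − mid J)p̄ + (Ĵ − mid J)M̄γ`; the first term lies in `m`, and since
`|Ĵ_ik − mid(J)_ik| ≤ diam(J_ik)/2` the `i`-th entry of the second is at most
`(1/2) Σ_j Σ_k diam(J_ik)|M̄_kj|`. So the residual lies in the box `P B∞ⁿ`, and `x` itself
serves as the point of `X`.
-/

open Matrix BigOperators

section

variable {R ι κ : Type*} [Field R] [LinearOrder R] [IsStrictOrderedRing R] [Fintype ι]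

theorem exists_abs_le_one_of_abs_le_diagonal [DecidableEq ι] {r d : ι → R}
    (hr : ∀ i, |r i| ≤ d i) :
    ∃ e : ι → R, (∀ i, |e i| ≤ 1) ∧ r = diagonal d *ᵥ e := by
  refine ⟨fun i => r i / d i, fun i => ?_, funext fun i => ?_⟩
  · rcases (abs_nonneg _ |>.trans (hr i)).eq_or_lt with hd | hd
    · simp [← hd]
    · rw [abs_div, abs_of_pos hd, div_le_one hd]
      exact hr i
  · rw [mulVec_diagonal]
    rcases eq_or_ne (d i) 0 with hd | hd
    · simpa [hd] using hr i
    · field_simp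

theorem abs_mulVec_apply_le (D : Matrix κ ι R) (v : ι → R) (k : κ) :
    |(D *ᵥ v) k| ≤ ∑ j, |D k j| * |v j| := by
  simp only [mulVec, dotProduct, ← abs_mul]
  exact Finset.abs_sum_le_sum_abs _ _

theorem abs_mulVec_apply_le_sum_abs {D : Matrix κ ι R} {γ : ι → R} (hγ : ∀ j, |γ j| ≤ 1)
    (k : κ) : |(D *ᵥ γ) k| ≤ ∑ j, |D k j| :=
  (abs_mulVec_apply_le D γ k).trans <| Finset.sum_le_sum fun j _ =>
    mul_le_of_le_one_right (abs_nonneg _) (hγ j)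

end

section IntervalMatrix

variable {R ι κ μ : Type*} [Field R] [LinearOrder R] [IsStrictOrderedRing R]

def intervalMid (Jl Ju : Matrix ι κ R) : Matrix ι κ R :=
  Matrix.of fun i k => (Jl i k + Ju i k) / 2

theorem abs_sub_intervalMid_le {Jl Ju Jhat : Matrix ι κ R} {i : ι} {k : κ}
    (h : Jl i k ≤ Jhat i k ∧ Jhat i k ≤ Ju i k) :
    |Jhat i k - intervalMid Jl Ju i k| ≤ (Ju i k - Jl i k) / 2 := by
  simp only [intervalMid, of_apply, abs_le]
  constructor <;> linarith [h.1, h.2]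

theorem abs_sub_intervalMid_mulVec_mulVec_le [Fintype κ] [Fintype μ] {Jl Ju Jhat : Matrix ι κ R}
    (hJhat : ∀ i k, Jl i k ≤ Jhat i k ∧ Jhat i k ≤ Ju i k) (Mbar : Matrix κ μ R)
    {γ : μ → R} (hγ : ∀ j, |γ j| ≤ 1) (i : ι) :
    |((Jhat - intervalMid Jl Ju) *ᵥ (Mbar *ᵥ γ)) i| ≤
      (1 / 2) * ∑ j, ∑ k, (Ju i k - Jl i k) * |Mbar k j| :=
  calc |((Jhat - intervalMid Jl Ju) *ᵥ (Mbar *ᵥ γ)) i|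
      ≤ ∑ k, |(Jhat - intervalMid Jl Ju) i k| * |(Mbar *ᵥ γ) k| := abs_mulVec_apply_le _ _ _
    _ ≤ ∑ k, (Ju i k - Jl i k) / 2 * ∑ j, |Mbar k j| :=
        Finset.sum_le_sum fun k _ =>
          mul_le_mul (abs_sub_intervalMid_le (hJhat i k)) (abs_mulVec_apply_le_sum_abs hγ k)
            (abs_nonneg _) (by linarith [(hJhat i k).1, (hJhat i k).2])
    _ = (1 / 2) * ∑ j, ∑ k, (Ju i k - Jl i k) * |Mbar k j| := by
        simp only [Finset.mul_sum]
        rw [Finset.sum_comm]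
        exact Finset.sum_congr rfl fun k _ => Finset.sum_congr rfl fun j _ => by ring

end IntervalMatrix

theorem cz_inclusion_general
    (m n ng nc ngbar : ℕ)
    (p : Fin m → ℝ) (M : Matrix (Fin m) (Fin ng) ℝ)
    (A : Matrix (Fin nc) (Fin ng) ℝ) (b : Fin nc → ℝ)
    (Jl Ju : Matrix (Fin n) (Fin m) ℝ)
    (pbar : Fin m → ℝ) (Mbar : Matrix (Fin m) (Fin ngbar) ℝ)
    -- the zonotope X̄ = p̄ ⊕ M̄ B∞ contains X = p ⊕ M B∞(A,b)
    (hXbar : {x : Fin m → ℝ | ∃ ξ : Fin ng → ℝ,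
        (∀ i, |ξ i| ≤ 1) ∧ A.mulVec ξ = b ∧ x = p + M.mulVec ξ} ⊆
      {x : Fin m → ℝ | ∃ γ : Fin ngbar → ℝ,
        (∀ i, |γ i| ≤ 1) ∧ x = pbar + Mbar.mulVec γ})
    (mrad : Fin n → ℝ)
    -- the interval vector m = [−mrad, mrad] (midpoint 0) contains (J − mid J) p̄
    (hm : ∀ Jhat : Matrix (Fin n) (Fin m) ℝ,
      (∀ i k, Jl i k ≤ Jhat i k ∧ Jhat i k ≤ Ju i k) →
      ∀ i, |((Jhat - Matrix.of fun i k => (Jl i k + Ju i k) / 2).mulVec pbar) i| ≤ mrad i)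
    (P : Fin n → ℝ)
    (hP : ∀ i, P i = mrad i + (1 / 2) * ∑ j, ∑ k, (Ju i k - Jl i k) * |Mbar k j|) :
    ∀ Jhat : Matrix (Fin n) (Fin m) ℝ,
      (∀ i k, Jl i k ≤ Jhat i k ∧ Jhat i k ≤ Ju i k) →
      ∀ x ∈ {x : Fin m → ℝ | ∃ ξ : Fin ng → ℝ,
          (∀ i, |ξ i| ≤ 1) ∧ A.mulVec ξ = b ∧ x = p + M.mulVec ξ},
        ∃ x' ∈ {x : Fin m → ℝ | ∃ ξ : Fin ng → ℝ,
            (∀ i, |ξ i| ≤ 1) ∧ A.mulVec ξ = b ∧ x = p + M.mulVec ξ},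
          ∃ e : Fin n → ℝ, (∀ i, |e i| ≤ 1) ∧
            Jhat.mulVec x =
              (Matrix.of fun i k => (Jl i k + Ju i k) / 2 : Matrix (Fin n) (Fin m) ℝ).mulVec x'
                + (Matrix.diagonal P).mulVec e := by
  intro Jhat hJhat x hx
  obtain ⟨γ, hγ, rfl⟩ := hXbar hx
  have hsplit : Jhat *ᵥ (pbar + Mbar *ᵥ γ) - intervalMid Jl Ju *ᵥ (pbar + Mbar *ᵥ γ) =
      (Jhat - intervalMid Jl Ju) *ᵥ pbar + (Jhat - intervalMid Jl Ju) *ᵥ (Mbar *ᵥ γ) := by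
    rw [← mulVec_add, sub_mulVec]
  have hresidual : ∀ i, |(Jhat *ᵥ (pbar + Mbar *ᵥ γ) -
      intervalMid Jl Ju *ᵥ (pbar + Mbar *ᵥ γ)) i| ≤ P i := fun i => by
    rw [hsplit, hP i, Pi.add_apply]
    exact (abs_add_le _ _).trans <|
      add_le_add (hm Jhat hJhat i) (abs_sub_intervalMid_mulVec_mulVec_le hJhat Mbar hγ i)
  obtain ⟨e, he, hre⟩ := exists_abs_le_one_of_abs_le_diagonal hresidual
  exact ⟨_, hx, e, he, by rw [← hre]; exact (add_sub_cancel _ _).symm⟩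

/-- CZ-inclusion (Theorem 1): if `X = p ⊕ M B∞(A,b)`, `J` is an interval matrix,
`X̄ = p̄ ⊕ M̄ B∞` is a zonotope containing `X`, `m` is an interval vector with
midpoint `0` and radii `mrad` containing `(J − mid J) p̄`, and `P` is the diagonal
matrix with `P_ii = (1/2)diam(m_i) + (1/2)Σ_j Σ_k diam(J_ik)|M̄_kj|`, then
`{Ĵx : Ĵ ∈ J, x ∈ X} ⊆ mid(J) X ⊕ P B∞ⁿ`. -/
theorem cz_inclusion
    (m n ng nc ngbar : ℕ)
    (p : Fin m → ℝ) (M : Matrix (Fin m) (Fin ng) ℝ)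
    (A : Matrix (Fin nc) (Fin ng) ℝ) (b : Fin nc → ℝ)
    (Jl Ju : Matrix (Fin n) (Fin m) ℝ) (hJ : ∀ i k, Jl i k ≤ Ju i k)
    (pbar : Fin m → ℝ) (Mbar : Matrix (Fin m) (Fin ngbar) ℝ)
    -- the zonotope X̄ = p̄ ⊕ M̄ B∞ contains X = p ⊕ M B∞(A,b)
    (hXbar : {x : Fin m → ℝ | ∃ ξ : Fin ng → ℝ,
        (∀ i, |ξ i| ≤ 1) ∧ A.mulVec ξ = b ∧ x = p + M.mulVec ξ} ⊆
      {x : Fin m → ℝ | ∃ γ : Fin ngbar → ℝ,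
        (∀ i, |γ i| ≤ 1) ∧ x = pbar + Mbar.mulVec γ})
    (mrad : Fin n → ℝ)
    -- the interval vector m = [−mrad, mrad] (midpoint 0) contains (J − mid J) p̄
    (hm : ∀ Jhat : Matrix (Fin n) (Fin m) ℝ,
      (∀ i k, Jl i k ≤ Jhat i k ∧ Jhat i k ≤ Ju i k) →
      ∀ i, |((Jhat - Matrix.of fun i k => (Jl i k + Ju i k) / 2).mulVec pbar) i| ≤ mrad i)
    (P : Fin n → ℝ)
    (hP : ∀ i, P i = mrad i + (1 / 2) * ∑ j, ∑ k, (Ju i k - Jl i k) * |Mbar k j|) :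
    ∀ Jhat : Matrix (Fin n) (Fin m) ℝ,
      (∀ i k, Jl i k ≤ Jhat i k ∧ Jhat i k ≤ Ju i k) →
      ∀ x ∈ {x : Fin m → ℝ | ∃ ξ : Fin ng → ℝ,
          (∀ i, |ξ i| ≤ 1) ∧ A.mulVec ξ = b ∧ x = p + M.mulVec ξ},
        ∃ x' ∈ {x : Fin m → ℝ | ∃ ξ : Fin ng → ℝ,
            (∀ i, |ξ i| ≤ 1) ∧ A.mulVec ξ = b ∧ x = p + M.mulVec ξ},
          ∃ e : Fin n → ℝ, (∀ i, |e i| ≤ 1) ∧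
            Jhat.mulVec x =
              (Matrix.of fun i k => (Jl i k + Ju i k) / 2 : Matrix (Fin n) (Fin m) ℝ).mulVec x'
                + (Matrix.diagonal P).mulVec e :=
  cz_inclusion_general m n ng nc ngbar p M A b Jl Ju pbar Mbar hXbar mrad hm P hP
end

section
/- (Mean value extension) Let μ : ℝⁿ × ℝ^{nw} → ℝⁿ be continuously differentiable, X ⊂ ℝⁿ and W ⊂ ℝ^{nw} constrained zonotopes, and h ∈ X. Let Z be a set with μ(h, w) ∈ Z for all w ∈ W, and let J be an interval matrix containing the transposed gradient ∇ₓᵀμ(x, w) for all (x,w) ∈ X × W. Then for all (x,w) ∈ X × W, μ(x,w) ∈ Z ⊕ ◁(J, X − h), where ◁(J, X−h) is any set satisfying {Ĵ(x−h) : Ĵ ∈ J, x ∈ X} ⊆ ◁(J, X−h). -/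
/-!
Apply the mean value theorem to each component `μ i (·, w)` on the segment `[h, x]`, which lies
in `X` because constrained zonotopes are convex. The mean-value point may differ from row to row,
but every row of the resulting matrix `Ĵ` is a gradient taken at a point of `X × W`, so `Ĵ ∈ J`
and `μ(x, w) = μ(h, w) + Ĵ (x - h) ∈ Z ⊕ Enc`.
-/

open Matrix

theorem convex_constrainedZonotope {m κ ι : Type*} [Fintype κ] [Fintype ι]
    (G : Matrix m κ ℝ) (c : m → ℝ) (A : Matrix ι κ ℝ) (b : ι → ℝ) :
    Convex ℝ {x | ∃ ξ : κ → ℝ, (∀ i, |ξ i| ≤ 1) ∧ A *ᵥ ξ = b ∧ x = c + G *ᵥ ξ} := by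
  set K := (Set.univ.pi fun _ : κ => Set.Icc (-1 : ℝ) 1) ∩ A.mulVecLin ⁻¹' {b}
  have hK : Convex ℝ K :=
    (convex_pi fun _ _ => convex_Icc _ _).inter ((convex_singleton b).linear_preimage _)
  have himage : {x | ∃ ξ : κ → ℝ, (∀ i, |ξ i| ≤ 1) ∧ A *ᵥ ξ = b ∧ x = c + G *ᵥ ξ} =
      (c + ·) '' (G.mulVecLin '' K) := by
    ext x
    constructor
    · rintro ⟨ξ, hξ, hA, rfl⟩
      exact ⟨_, ⟨ξ, ⟨fun i _ => abs_le.1 (hξ i), hA⟩, rfl⟩, rfl⟩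
    · rintro ⟨_, ⟨ξ, ⟨hξ, hA⟩, rfl⟩, rfl⟩
      exact ⟨ξ, fun i => abs_le.2 (hξ i trivial), hA, rfl⟩
  rw [himage]
  exact (hK.linear_image G.mulVecLin).translate c

theorem ContinuousLinearMap.apply_eq_dotProduct {ι : Type*} [Fintype ι] [DecidableEq ι]
    (L : (ι → ℝ) →L[ℝ] ℝ) (v : ι → ℝ) : L v = (fun j => L (Pi.single j 1)) ⬝ᵥ v := by
  conv_lhs => rw [pi_eq_sum_univ' v]
  simp [dotProduct, mul_comm]

theorem Convex.exists_sub_eq_mulVec_of_fderiv_rows {ι κ : Type*} [Fintype ι] [DecidableEq ι]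
    {f : (ι → ℝ) → κ → ℝ} (hf : ∀ i, Differentiable ℝ (fun y => f y i))
    {s : Set (ι → ℝ)} (hs : Convex ℝ s) {x y : ι → ℝ} (hx : x ∈ s) (hy : y ∈ s) :
    ∃ δ : κ → ι → ℝ, (∀ i, δ i ∈ s) ∧
      f y - f x =
        Matrix.of (fun i j => fderiv ℝ (fun z => f z i) (δ i) (Pi.single j 1)) *ᵥ (y - x) := by
  have hmvt : ∀ i, ∃ δ ∈ s, f y i - f x i = fderiv ℝ (fun z => f z i) δ (y - x) := fun i =>
    have ⟨δ, hδ, heq⟩ := domain_mvt (fun z _ => ((hf i) z).hasFDerivAt.hasFDerivWithinAt) hs hx hy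
    ⟨δ, hs.segment_subset hx hy hδ, heq⟩
  choose δ hδs hδeq using hmvt
  refine ⟨δ, hδs, funext fun i => ?_⟩
  rw [Pi.sub_apply, hδeq, ContinuousLinearMap.apply_eq_dotProduct]
  rfl

theorem mean_value_extension_general
    (n nw ng nc : ℕ)
    (μ : (Fin n → ℝ) → (Fin nw → ℝ) → (Fin n → ℝ))
    (hC1 : ContDiff ℝ 1 (fun p : (Fin n → ℝ) × (Fin nw → ℝ) => μ p.1 p.2))
    (Gx : Matrix (Fin n) (Fin ng) ℝ) (cx : Fin n → ℝ)
    (Ax : Matrix (Fin nc) (Fin ng) ℝ) (bx : Fin nc → ℝ)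
    (X : Set (Fin n → ℝ)) (W : Set (Fin nw → ℝ))
    (hX : X = {x | ∃ ξ : Fin ng → ℝ,
        (∀ i, |ξ i| ≤ 1) ∧ Ax.mulVec ξ = bx ∧ x = cx + Gx.mulVec ξ})
    (h : Fin n → ℝ) (hhX : h ∈ X)
    (Z : Set (Fin n → ℝ)) (hZ : ∀ w ∈ W, μ h w ∈ Z)
    (Jl Ju : Matrix (Fin n) (Fin n) ℝ)
    -- J contains the transposed gradient of μ w.r.t. x on X × W
    (hJ : ∀ x ∈ X, ∀ w ∈ W, ∀ i j,
      Jl i j ≤ fderiv ℝ (fun x' => μ x' w i) x (Pi.single j 1) ∧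
      fderiv ℝ (fun x' => μ x' w i) x (Pi.single j 1) ≤ Ju i j)
    (Enc : Set (Fin n → ℝ))
    -- Enc is any enclosure of {Ĵ(x − h) : Ĵ ∈ J, x ∈ X}
    (hEnc : ∀ Jhat : Matrix (Fin n) (Fin n) ℝ,
      (∀ i j, Jl i j ≤ Jhat i j ∧ Jhat i j ≤ Ju i j) →
      ∀ x ∈ X, Jhat.mulVec (x - h) ∈ Enc) :
    ∀ x ∈ X, ∀ w ∈ W, ∃ z ∈ Z, ∃ e ∈ Enc, μ x w = z + e := by
  intro x hx w hw
  have hXconv : Convex ℝ X := hX ▸ convex_constrainedZonotope Gx cx Ax bx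
  have hdiff : ∀ i, Differentiable ℝ (fun x' => μ x' w i) := differentiable_pi.1 <|
    (hC1.differentiable one_ne_zero).comp (differentiable_id.prodMk (differentiable_const w))
  obtain ⟨δ, hδX, hμ⟩ := hXconv.exists_sub_eq_mulVec_of_fderiv_rows hdiff hhX hx
  exact ⟨μ h w, hZ w hw, _, hEnc _ (fun i j => hJ (δ i) (hδX i) w hw i j) x hx,
    eq_add_of_sub_eq' hμ⟩

/-- Mean value extension (Theorem 2): if `μ` is C¹, `X` and `W` are constrained
zonotopes, `h ∈ X`, `Z ⊇ μ(h, W)`, `J` is an interval matrix containing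
`∇ₓᵀμ(x,w)` for all `(x,w) ∈ X × W`, and `Enc ⊇ {Ĵ(x−h) : Ĵ ∈ J, x ∈ X}`,
then `μ(X, W) ⊆ Z ⊕ Enc`. -/
theorem mean_value_extension
    (n nw ng nc ngw ncw : ℕ)
    (μ : (Fin n → ℝ) → (Fin nw → ℝ) → (Fin n → ℝ))
    (hC1 : ContDiff ℝ 1 (fun p : (Fin n → ℝ) × (Fin nw → ℝ) => μ p.1 p.2))
    (Gx : Matrix (Fin n) (Fin ng) ℝ) (cx : Fin n → ℝ)
    (Ax : Matrix (Fin nc) (Fin ng) ℝ) (bx : Fin nc → ℝ)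
    (Gw : Matrix (Fin nw) (Fin ngw) ℝ) (cw : Fin nw → ℝ)
    (Aw : Matrix (Fin ncw) (Fin ngw) ℝ) (bw : Fin ncw → ℝ)
    (X : Set (Fin n → ℝ)) (W : Set (Fin nw → ℝ))
    (hX : X = {x | ∃ ξ : Fin ng → ℝ,
        (∀ i, |ξ i| ≤ 1) ∧ Ax.mulVec ξ = bx ∧ x = cx + Gx.mulVec ξ})
    (hW : W = {w | ∃ η : Fin ngw → ℝ,
        (∀ i, |η i| ≤ 1) ∧ Aw.mulVec η = bw ∧ w = cw + Gw.mulVec η})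
    (h : Fin n → ℝ) (hhX : h ∈ X)
    (Z : Set (Fin n → ℝ)) (hZ : ∀ w ∈ W, μ h w ∈ Z)
    (Jl Ju : Matrix (Fin n) (Fin n) ℝ)
    -- J contains the transposed gradient of μ w.r.t. x on X × W
    (hJ : ∀ x ∈ X, ∀ w ∈ W, ∀ i j,
      Jl i j ≤ fderiv ℝ (fun x' => μ x' w i) x (Pi.single j 1) ∧
      fderiv ℝ (fun x' => μ x' w i) x (Pi.single j 1) ≤ Ju i j)
    (Enc : Set (Fin n → ℝ))
    -- Enc is any enclosure of {Ĵ(x − h) : Ĵ ∈ J, x ∈ X}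
    (hEnc : ∀ Jhat : Matrix (Fin n) (Fin n) ℝ,
      (∀ i j, Jl i j ≤ Jhat i j ∧ Jhat i j ≤ Ju i j) →
      ∀ x ∈ X, Jhat.mulVec (x - h) ∈ Enc) :
    ∀ x ∈ X, ∀ w ∈ W, ∃ z ∈ Z, ∃ e ∈ Enc, μ x w = z + e :=
  mean_value_extension_general n nw ng nc μ hC1 Gx cx Ax bx X W hX h hhX Z hZ Jl Ju hJ Enc hEnc
end
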